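/- Let G be a DC graph on {1,...,N} and let (a,p) ∈ P_G, with unique stationary tuple s(a,p). Then, with the convention s_0(a,p) := 0, for every i ∈ {1,...,N} one has s_i(a,p) − s_{i−1}(a,p) = z_i^G(a,p). In particular, the speed of the front of the stationary liquid bin model with parameters (a,p), namely 1/s_1(a,p), equals (1 + Σ_{j=1}^N Γ^G_{1,j}(q_{b_G(j)} − q_{b_G(j−1)})/q_{b_G(j−1)}) / (Σ_{j=1}^N Γ^G_{1,j}·d_j/q_{b_G(j−1)}). -/

import Mathlib

open Filter Topology
open scoped Classical

noncomputable section

/-- The positive part `x₊ = max x 0` of a real number. -/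
def pos' (x : ℝ) : ℝ := max x 0

/-- `qq p i = p 1 + ... + p i` (so `qq p 0 = 0`). -/
def qq (p : ℕ → ℝ) (i : ℕ) : ℝ := ∑ j ∈ Finset.Icc 1 i, p j

/-- `dpar a i = a i - a (i-1)`, with the convention `a 0 = 0`. -/
def dpar (a : ℕ → ℝ) (i : ℕ) : ℝ := if i = 1 then a 1 else a i - a (i - 1)

/-- `(a, p)` is a parameter tuple in `P^{2N}`:
`0 < a 1 < a 2 < ... < a N` and `p 1, ..., p N > 0`. -/
def IsParam (N : ℕ) (a p : ℕ → ℝ) : Prop :=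
  0 < a 1 ∧ (∀ i, 1 ≤ i → i < N → a i < a (i + 1)) ∧ (∀ i, 1 ≤ i → i ≤ N → 0 < p i)

/-- `s` is a stationary tuple for the parameters `(a, p)`:
`0 < s 1 < ... < s N` and `a i = ∑_{j=1}^N p j * (s i - s j + s 1)₊` for `1 ≤ i ≤ N`. -/
def IsStatTuple (N : ℕ) (a p s : ℕ → ℝ) : Prop :=
  0 < s 1 ∧ (∀ i, 1 ≤ i → i < N → s i < s (i + 1)) ∧
  ∀ i, 1 ≤ i → i ≤ N → a i = ∑ j ∈ Finset.Icc 1 N, p j * pos' (s i - s j + s 1)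

/-- The inverse of (the restriction to `[0, ∞)` of) a function `y : ℝ → ℝ`. -/
def tinv (y : ℝ → ℝ) (x : ℝ) : ℝ := Function.invFunOn y (Set.Ici 0) x

/-- The right derivative of `y` at `t` (the derivative of `y` at `t` within `[t, ∞)`). -/
def rD (y : ℝ → ℝ) (t : ℝ) : ℝ := derivWithin y (Set.Ici t) t

/-- The sequence `(y k)` satisfies recurrence (R).  The condition on the initial function `y 0`
(continuous, piecewise linear with at most `N` points of non-differentiability, vanishing at `0`,
with non-decreasing right derivative taking values in `{q 1, ..., q N}`) is encoded through its
canonical representation: such functions are exactly those of the form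
`t ↦ ∑_{j=1}^N p j * (t - c j)₊` with `c` non-negative, non-decreasing and `c 1 = 0`. -/
def SatisfiesR (N : ℕ) (a p : ℕ → ℝ) (y : ℕ → ℝ → ℝ) : Prop :=
  (∃ c : ℕ → ℝ, c 1 = 0 ∧ (∀ j, 1 ≤ j → j ≤ N → 0 ≤ c j) ∧
      (∀ j, 1 ≤ j → j < N → c j ≤ c (j + 1)) ∧
      ∀ t : ℝ, 0 ≤ t → y 0 t = ∑ j ∈ Finset.Icc 1 N, p j * pos' (t - c j)) ∧
  ∀ k : ℕ, ∀ t : ℝ, 0 ≤ t →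
    y (k + 1) t = ∑ j ∈ Finset.Icc 1 N, p j * pos' (t - tinv (y k) (a j) + tinv (y k) (a 1))

/-- The breakpoints `c j` of the lower bounding trajectory `y₀⁻`:
`c 1 = 0` and `c j = d 1 / q 1 + ∑_{l=2}^j d l / q (l-1)` for `j ≥ 2`. -/
def cminus (a p : ℕ → ℝ) (j : ℕ) : ℝ :=
  if j ≤ 1 then 0
  else a 1 / qq p 1 + ∑ l ∈ Finset.Icc 2 j, (a l - a (l - 1)) / qq p (l - 1)

/-- The lower bounding initial trajectory `y₀⁻`. -/
def yminus0 (N : ℕ) (a p : ℕ → ℝ) : ℝ → ℝ :=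
  fun t => ∑ j ∈ Finset.Icc 1 N, p j * pos' (t - cminus a p j)

/-- The upper bounding initial trajectory `y₀⁺ : t ↦ q N * t`. -/
def yplus0 (N : ℕ) (p : ℕ → ℝ) : ℝ → ℝ := fun t => qq p N * t

/-- The sequence satisfying recurrence (R) with prescribed initial term `y0`. -/
def iterR (N : ℕ) (a p : ℕ → ℝ) (y0 : ℝ → ℝ) : ℕ → ℝ → ℝ
  | 0 => y0
  | k + 1 => fun t =>
      ∑ j ∈ Finset.Icc 1 N,
        p j * pos' (t - tinv (iterR N a p y0 k) (a j) + tinv (iterR N a p y0 k) (a 1))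

/-- `y` is a stationary trajectory: an increasing bijection of `[0,∞)` satisfying the
fixed-point equation of recurrence (R). -/
def IsStatTraj (N : ℕ) (a p : ℕ → ℝ) (y : ℝ → ℝ) : Prop :=
  StrictMonoOn y (Set.Ici 0) ∧ Set.BijOn y (Set.Ici 0) (Set.Ici 0) ∧
  ∀ t : ℝ, 0 ≤ t → y t = ∑ j ∈ Finset.Icc 1 N, p j * pos' (t - tinv y (a j) + tinv y (a 1))

/-- `E_N`: the set of pairs `(i, j)` with `1 ≤ i < j ≤ N`. -/
def ENfin (N : ℕ) : Finset (ℕ × ℕ) :=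
  (Finset.Icc 1 N ×ˢ Finset.Icc 1 N).filter fun e => e.1 < e.2

/-- `Nested e e'` means `e ≼_E e'`, i.e. `e` is nested in `e'`. -/
def Nested (e e' : ℕ × ℕ) : Prop := e'.1 ≤ e.1 ∧ e.1 < e.2 ∧ e.2 ≤ e'.2

/-- `E` is the edge set of a downward closed graph on `{1, ..., N}`. -/
def IsDCGraph (N : ℕ) (E : Finset (ℕ × ℕ)) : Prop :=
  E ⊆ ENfin N ∧ ∀ e ∈ E, ∀ e' : ℕ × ℕ, Nested e' e → e' ∈ E

/-- `bG E i` is the greatest `j > i` with `(i, j) ∈ E`, and `i` if there is no such `j`;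
by convention `bG E 0 = 1`. -/
def bG (E : Finset (ℕ × ℕ)) (i : ℕ) : ℕ :=
  if i = 0 then 1 else max i ((E.filter fun e => e.1 = i).sup fun e => e.2)

/-- `m(G)`: the maximal elements of `E` for `≼_E`. -/
def maxE (E : Finset (ℕ × ℕ)) : Finset (ℕ × ℕ) :=
  E.filter fun e => ∀ e' ∈ E, Nested e e' → e' = e

/-- `M(G)`: the minimal elements of `E_N \ E` for `≼_E`. -/
def minNE (N : ℕ) (E : Finset (ℕ × ℕ)) : Finset (ℕ × ℕ) :=
  (ENfin N \ E).filter fun e => ∀ e' ∈ ENfin N \ E, Nested e' e → e' = e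

/-- The map `T(G) : ℝ^N → ℝ^N`. -/
def TG (a p : ℕ → ℝ) (E : Finset (ℕ × ℕ)) (s : ℕ → ℝ) (i : ℕ) : ℝ :=
  (1 / qq p (bG E i)) * (a i + ∑ j ∈ Finset.Icc 1 (bG E i), p j * (s j - s 1))

/-- The product of `γ` over the consecutive pairs (edges) of a list of vertices. -/
def pathProd (γ : ℕ → ℕ → ℝ) (l : List ℕ) : ℝ := (List.zipWith γ l l.tail).prod

/-- `Γ i j`: the sum, over all directed paths from `i` to `j` using edges of `E`, of the
product of `γ` over the edges of the path.  Since all edges of a DC graph increase, a directed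
path from `i` to `j` is identified with the set `S ⊆ (i, j)` of its intermediate vertices,
subject to consecutive vertices being joined by edges of `E`. -/
def GammaPath (E : Finset (ℕ × ℕ)) (γ : ℕ → ℕ → ℝ) (i j : ℕ) : ℝ :=
  if i = j then 1
  else if i < j then
    ∑ S ∈ (Finset.Ioo i j).powerset,
      if List.Chain' (fun u v => (u, v) ∈ E) (Finset.sort (insert i (insert j S)) (· ≤ ·))
      then pathProd γ (Finset.sort (insert i (insert j S)) (· ≤ ·)) else 0
  else 0

/-- The edge weight `γ^G_{i,j}`. -/
def gammaG (p : ℕ → ℝ) (E : Finset (ℕ × ℕ)) (i j : ℕ) : ℝ :=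
  (qq p (bG E i) - qq p (max (j - 1) (bG E (i - 1)))) / qq p (bG E (i - 1))

/-- `Γ^G_{i,j}`. -/
def GammaG (p : ℕ → ℝ) (E : Finset (ℕ × ℕ)) (i j : ℕ) : ℝ := GammaPath E (gammaG p E) i j

/-- `z_1^G (a, p)`. -/
def z1G (N : ℕ) (a p : ℕ → ℝ) (E : Finset (ℕ × ℕ)) : ℝ :=
  (∑ j ∈ Finset.Icc 1 N, GammaG p E 1 j * dpar a j / qq p (bG E (j - 1))) /
  (1 + ∑ j ∈ Finset.Icc 1 N,
      GammaG p E 1 j * (qq p (bG E j) - qq p (bG E (j - 1))) / qq p (bG E (j - 1)))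

/-- `z_i^G (a, p)`. -/
def zG (N : ℕ) (a p : ℕ → ℝ) (E : Finset (ℕ × ℕ)) (i : ℕ) : ℝ :=
  if i = 1 then z1G N a p E
  else
    (∑ j ∈ Finset.Icc i N, GammaG p E i j * dpar a j / qq p (bG E (j - 1))) -
      z1G N a p E *
        ∑ j ∈ Finset.Icc i N,
          GammaG p E i j * (qq p (bG E j) - qq p (bG E (j - 1))) / qq p (bG E (j - 1))

/-- `Z^G_{i,j} (a, p) = z_{i+1}^G + ... + z_j^G`. -/
def ZG (N : ℕ) (a p : ℕ → ℝ) (E : Finset (ℕ × ℕ)) (i j : ℕ) : ℝ :=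
  ∑ l ∈ Finset.Icc (i + 1) j, zG N a p E l

/-- The DC graph `Gr(a, p)` read off from the stationary tuple `s = s(a, p)`: its edges are
the pairs `(i, j) ∈ E_N` with `s 1 > s j - s i`. -/
def GrEdges (N : ℕ) (s : ℕ → ℝ) : Finset (ℕ × ℕ) :=
  (ENfin N).filter fun e => s e.2 - s e.1 < s 1

/-- `ζ` solves the linear system `S^G (a, p)`. -/
def SolvesS (N : ℕ) (a p : ℕ → ℝ) (E : Finset (ℕ × ℕ)) (ζ : ℕ → ℝ) : Prop :=
  ∀ i, 1 ≤ i → i ≤ N →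
    a i = ∑ j ∈ Finset.Icc 1 (bG E i),
      p j * ((∑ l ∈ Finset.Icc 1 i, ζ l) - (∑ l ∈ Finset.Icc 1 j, ζ l) + ζ 1)

/-- `P^{2N}`, viewed as a (cylinder) subset of the space of pairs of real sequences; only the
coordinates `a 1, ..., a N, p 1, ..., p N` are constrained. -/
def Pset (N : ℕ) : Set ((ℕ → ℝ) × (ℕ → ℝ)) := {ap | IsParam N ap.1 ap.2}

/-- The region `P_G = {(a, p) ∈ P^{2N} : Gr(a, p) = G}`. -/
def PGset (N : ℕ) (E : Finset (ℕ × ℕ)) : Set ((ℕ → ℝ) × (ℕ → ℝ)) :=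
  {ap | IsParam N ap.1 ap.2 ∧ ∃ s : ℕ → ℝ, IsStatTuple N ap.1 ap.2 s ∧ GrEdges N s = E}

/-- The boundary of `P_G` relative to `P^{2N}`.  Since `P^{2N}` is open, the closure of `P_G`
relative to `P^{2N}` is `closure (PGset N E) ∩ Pset N` and its relative interior is
`interior (PGset N E)`. -/
def relBoundary (N : ℕ) (E : Finset (ℕ × ℕ)) : Set ((ℕ → ℝ) × (ℕ → ℝ)) :=
  (closure (PGset N E) ∩ Pset N) \ interior (PGset N E)

/-- The trajectory `y^{(m)}` built from a tuple `s`: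
`t ↦ ∑_{j=1}^N p j * (t - s j + s 1)₊`. -/
def trajOfS (N : ℕ) (p s : ℕ → ℝ) : ℝ → ℝ :=
  fun t => ∑ j ∈ Finset.Icc 1 N, p j * pos' (t - s j + s 1)

/-- The DC graph `G^{(m)}` associated with a tuple `s`: its edges are the `(i, j) ∈ E_N` with
`t^{(m)} (a i) - s j + s 1 > 0`, where `t^{(m)}` is the inverse of `trajOfS N p s`. -/
def GrFromS (N : ℕ) (a p s : ℕ → ℝ) : Finset (ℕ × ℕ) :=
  (ENfin N).filter fun e => 0 < tinv (trajOfS N p s) (a e.1) - s e.2 + s 1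

end

/-!
On `P_G` the graph resolves the positive parts in the stationary equations: the summand
`(s i - s j + s 1)₊` is active exactly when `j ≤ b_G(i)`. Subtracting consecutive equations turns
them into a triangular linear system `z i = w i + ∑_{(i,l) ∈ G} γ^G_{i,l} z l` for the increments
`z i = s i - s (i - 1)`, with `w j = (d j - s 1 (q_{b(j)} - q_{b(j-1)})) / q_{b(j-1)}`. Splitting
each path at its second vertex shows that the path sums solve it: `z i = ∑_j Γ^G_{i,j} w j`. For
`i = 1` this is a linear equation `s 1 (1 + B) = A` in `s 1`, with `B ≥ 0` because all weights
`γ^G` are nonnegative.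
-/

open Finset

section Intervals

lemma Icc_one_eq_Ioc_zero (n : ℕ) : Icc 1 n = Ioc 0 n :=
  Icc_add_one_left_eq_Ioc 0 n

lemma sum_Icc_one_add_sum_Ioc {M : Type*} [AddCommMonoid M] (f : ℕ → M) {m n : ℕ}
    (h : m ≤ n) : ∑ j ∈ Icc 1 m, f j + ∑ j ∈ Ioc m n, f j = ∑ j ∈ Icc 1 n, f j := by
  rw [Icc_one_eq_Ioc_zero, Icc_one_eq_Ioc_zero, sum_Ioc_consecutive f (Nat.zero_le m) h]

lemma sum_Ioc_sub_pred {M : Type*} [AddCommGroup M] (f : ℕ → M) {i j : ℕ} (h : i ≤ j) :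
    ∑ l ∈ Ioc i j, (f l - f (l - 1)) = f j - f i := by
  induction j, h using Nat.le_induction with
  | base => simp
  | succ n hn ih => rw [sum_Ioc_succ_top hn, ih]; simp

lemma sum_Ioc_mul_sum_Ioc {R : Type*} [Semiring R] (p x : ℕ → R) (i m n : ℕ) :
    ∑ j ∈ Ioc m n, p j * ∑ l ∈ Ioc i j, x l =
      ∑ l ∈ Ioc i n, (∑ j ∈ Ioc (max (l - 1) m) n, p j) * x l := by
  simp_rw [mul_sum, sum_mul]
  exact sum_comm' fun j l => by simp only [mem_Ioc]; omega

lemma sum_powerset_Ioo {M : Type*} [AddCommMonoid M] (f : Finset ℕ → M) (i j : ℕ) :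
    ∑ S ∈ (Ioo i j).powerset, f S =
      f ∅ + ∑ l ∈ Ioo i j, ∑ S ∈ (Ioo l j).powerset, f (insert l S) := by
  induction hk : j - i using Nat.strong_induction_on generalizing i with
  | _ k ih =>
  rcases le_or_gt j (i + 1) with h | h
  · have hempty : Ioo i j = ∅ := by ext; simp; omega
    simp [hempty]
  · have hIoo : Ioo i j = insert (i + 1) (Ioo (i + 1) j) := by
      rw [Ioo_insert_left h, Ico_add_one_left_eq_Ioo]
    rw [hIoo, sum_powerset_insert (by simp), sum_insert (by simp),
      ih (j - (i + 1)) (by omega) (i + 1) rfl, add_assoc, add_comm (∑ l ∈ Ioo (i + 1) j, _)]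

end Intervals

section PartialSums

variable {N : ℕ} {p : ℕ → ℝ}

lemma qq_sub_qq (p : ℕ → ℝ) {m k : ℕ} (h : m ≤ k) :
    qq p k - qq p m = ∑ j ∈ Ioc m k, p j := by
  rw [qq, qq, ← sum_Icc_one_add_sum_Ioc p h, add_sub_cancel_left]

lemma qq_pos (hp : ∀ i, 1 ≤ i → i ≤ N → 0 < p i) {k : ℕ} (hk : 1 ≤ k) (hkN : k ≤ N) :
    0 < qq p k :=
  sum_pos (fun j hj => hp j (mem_Icc.1 hj).1 ((mem_Icc.1 hj).2.trans hkN))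
    ⟨1, mem_Icc.2 ⟨le_rfl, hk⟩⟩

lemma qq_le_qq (hp : ∀ i, 1 ≤ i → i ≤ N → 0 ≤ p i) {m k : ℕ} (h : m ≤ k) (hkN : k ≤ N) :
    qq p m ≤ qq p k :=
  sum_le_sum_of_subset_of_nonneg (Icc_subset_Icc_right h)
    fun j hj _ => hp j (mem_Icc.1 hj).1 ((mem_Icc.1 hj).2.trans hkN)

end PartialSums

section DCGraph

variable {N : ℕ} {E : Finset (ℕ × ℕ)}

lemma mem_ENfin {e : ℕ × ℕ} : e ∈ ENfin N ↔ 1 ≤ e.1 ∧ e.2 ≤ N ∧ e.1 < e.2 := by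
  simp only [ENfin, mem_filter, mem_product, mem_Icc]
  omega

@[simp]
lemma bG_zero (E : Finset (ℕ × ℕ)) : bG E 0 = 1 := rfl

lemma le_bG (E : Finset (ℕ × ℕ)) (i : ℕ) : i ≤ bG E i := by
  unfold bG
  split_ifs <;> omega

lemma one_le_bG (E : Finset (ℕ × ℕ)) (i : ℕ) : 1 ≤ bG E i := by
  unfold bG
  split_ifs <;> omega

lemma bG_le (hE : E ⊆ ENfin N) (hN : 1 ≤ N) {i : ℕ} (hiN : i ≤ N) : bG E i ≤ N := by
  unfold bG
  split_ifs
  · exact hN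
  · refine max_le hiN (Finset.sup_le fun e he => ?_)
    exact (mem_ENfin.1 (hE (mem_filter.1 he).1)).2.1

lemma le_bG_of_mem {i l : ℕ} (hi : i ≠ 0) (h : (i, l) ∈ E) : l ≤ bG E i := by
  rw [bG, if_neg hi]
  have hmem : (i, l) ∈ E.filter fun e => e.1 = i := mem_filter.2 ⟨h, rfl⟩
  exact le_max_of_le_right (le_sup (f := fun e : ℕ × ℕ => e.2) hmem)

lemma mem_of_lt_of_le_bG (hE : IsDCGraph N E) {i l : ℕ} (hi : i ≠ 0) (hil : i < l)
    (h : l ≤ bG E i) : (i, l) ∈ E := by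
  rw [bG, if_neg hi] at h
  have hl : l ≤ (E.filter fun e => e.1 = i).sup fun e => e.2 := by omega
  have hne : (E.filter fun e => e.1 = i).Nonempty :=
    Finset.nonempty_of_ne_empty fun h0 => by
      simp only [h0, sup_empty, bot_eq_zero', nonpos_iff_eq_zero] at hl
      omega
  obtain ⟨e, he, hsup⟩ := exists_mem_eq_sup _ hne fun e => e.2
  obtain ⟨heE, rfl⟩ := mem_filter.1 he
  exact hE.2 e heE (e.1, l) ⟨le_rfl, hil, hsup ▸ hl⟩

lemma bG_pred_le (hE : IsDCGraph N E) {i : ℕ} (hi : 1 ≤ i) : bG E (i - 1) ≤ bG E i := by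
  obtain rfl | hi1 := eq_or_lt_of_le hi
  · exact one_le_bG E 1
  by_cases hb : bG E (i - 1) ≤ i
  · exact hb.trans (le_bG E i)
  have hedge : (i - 1, bG E (i - 1)) ∈ E := mem_of_lt_of_le_bG hE (by omega) (by omega) le_rfl
  exact le_bG_of_mem (by omega) (hE.2 _ hedge (i, _) ⟨by omega, by omega, le_rfl⟩)

lemma qq_bG_pred_pos {p : ℕ → ℝ} (hp : ∀ i, 1 ≤ i → i ≤ N → 0 < p i) (hE : IsDCGraph N E)
    (hN : 1 ≤ N) {i : ℕ} (hi : 1 ≤ i) (hiN : i ≤ N) : 0 < qq p (bG E (i - 1)) :=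
  qq_pos hp (one_le_bG E _) ((bG_pred_le hE hi).trans (bG_le hE.1 hN hiN))

lemma gammaG_nonneg {p : ℕ → ℝ} (hp : ∀ i, 1 ≤ i → i ≤ N → 0 < p i) (hE : IsDCGraph N E)
    (hN : 1 ≤ N) {u v : ℕ} (h : (u, v) ∈ E) : 0 ≤ gammaG p E u v := by
  obtain ⟨hu, hvN, huv⟩ := mem_ENfin.1 (hE.1 h)
  have hbN : bG E u ≤ N := bG_le hE.1 hN (by omega)
  have hmax : max (v - 1) (bG E (u - 1)) ≤ bG E u :=
    max_le (by have := le_bG_of_mem (by omega) h; omega) (bG_pred_le hE hu)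
  exact div_nonneg (sub_nonneg.2 (qq_le_qq (fun i hi hiN => (hp i hi hiN).le) hmax hbN))
    (qq_bG_pred_pos hp hE hN hu (by omega)).le

end DCGraph

section StationaryTuple

variable {N : ℕ} {a p s : ℕ → ℝ} {E : Finset (ℕ × ℕ)}

def incr (s : ℕ → ℝ) (i : ℕ) : ℝ := s i - if i = 1 then 0 else s (i - 1)

lemma incr_one (s : ℕ → ℝ) : incr s 1 = s 1 := by simp [incr]

lemma sum_Ioc_incr (s : ℕ → ℝ) {i j : ℕ} (hi : 1 ≤ i) (hij : i ≤ j) :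
    ∑ l ∈ Ioc i j, incr s l = s j - s i := by
  rw [← sum_Ioc_sub_pred s hij]
  refine sum_congr rfl fun l hl => ?_
  rw [incr, if_neg (by have := (mem_Ioc.1 hl).1; omega)]

lemma mem_GrEdges {i j : ℕ} :
    (i, j) ∈ GrEdges N s ↔ (1 ≤ i ∧ j ≤ N ∧ i < j) ∧ s j - s i < s 1 := by
  rw [GrEdges, mem_filter, mem_ENfin]

lemma IsStatTuple.monotoneOn (hs : IsStatTuple N a p s) : MonotoneOn s (Set.Icc 1 N) :=
  (strictMonoOn_of_lt_add_one Set.ordConnected_Icc fun i _ hi hi1 =>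
    hs.2.1 i hi.1 (by simp only [Set.mem_Icc] at hi1; omega)).monotoneOn

lemma IsStatTuple.pos'_eq (hs : IsStatTuple N a p s) (hE : IsDCGraph N E)
    (hPG : GrEdges N s = E) {i j : ℕ} (hi : 1 ≤ i) (hiN : i ≤ N) (hj : 1 ≤ j) (hjN : j ≤ N) :
    pos' (s i - s j + s 1) = if j ≤ bG E i then s i - s j + s 1 else 0 := by
  split_ifs with hjb
  · refine max_eq_left ?_
    rcases le_or_gt j i with hji | hij
    · linarith [hs.1, hs.monotoneOn ⟨hj, hjN⟩ ⟨hi, hiN⟩ hji]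
    · have := (mem_GrEdges.1 (hPG ▸ mem_of_lt_of_le_bG hE (by omega) hij hjb)).2
      linarith
  · refine max_eq_right ?_
    have hnot : (i, j) ∉ GrEdges N s := hPG ▸ fun h => hjb (le_bG_of_mem (by omega) h)
    have hij : i < j := by have := le_bG E i; omega
    rw [mem_GrEdges, not_and, not_lt] at hnot
    linarith [hnot ⟨hi, hjN, hij⟩]

lemma IsStatTuple.eq_sum_Icc_bG (hs : IsStatTuple N a p s) (hE : IsDCGraph N E)
    (hPG : GrEdges N s = E) (hN : 1 ≤ N) {i : ℕ} (hi : 1 ≤ i) (hiN : i ≤ N) :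
    a i = ∑ j ∈ Icc 1 (bG E i), p j * (s i - s j + s 1) := by
  have hbN := bG_le hE.1 hN hiN
  rw [hs.2.2 i hi hiN]
  calc ∑ j ∈ Icc 1 N, p j * pos' (s i - s j + s 1)
      = ∑ j ∈ Icc 1 N, if j ≤ bG E i then p j * (s i - s j + s 1) else 0 :=
        sum_congr rfl fun j hj => by
          rw [hs.pos'_eq hE hPG hi hiN (mem_Icc.1 hj).1 (mem_Icc.1 hj).2, mul_ite, mul_zero]
    _ = ∑ j ∈ Icc 1 (bG E i), p j * (s i - s j + s 1) := by
        rw [← sum_filter]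
        congr 1
        ext j
        simp only [mem_filter, mem_Icc]
        omega

lemma IsStatTuple.dpar_eq (hs : IsStatTuple N a p s) (hE : IsDCGraph N E)
    (hPG : GrEdges N s = E) (hN : 1 ≤ N) {i : ℕ} (hi : 1 ≤ i) (hiN : i ≤ N) :
    dpar a i = qq p (bG E (i - 1)) * incr s i +
      ∑ j ∈ Ioc (bG E (i - 1)) (bG E i), p j * (s i - s j + s 1) := by
  have hai := hs.eq_sum_Icc_bG hE hPG hN hi hiN
  rw [← sum_Icc_one_add_sum_Ioc _ (bG_pred_le hE hi)] at hai
  obtain rfl | hi1 := eq_or_lt_of_le hi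
  · simp [dpar, qq, incr_one, hai]
  · rw [dpar, if_neg hi1.ne', hai, hs.eq_sum_Icc_bG hE hPG hN (by omega) (by omega), qq, sum_mul,
      incr, if_neg hi1.ne', add_sub_right_comm, ← sum_sub_distrib]
    congr 1
    exact sum_congr rfl fun j _ => by ring

lemma IsStatTuple.incr_eq (hs : IsStatTuple N a p s) (hp : ∀ i, 1 ≤ i → i ≤ N → 0 < p i)
    (hE : IsDCGraph N E) (hPG : GrEdges N s = E) (hN : 1 ≤ N) {i : ℕ} (hi : 1 ≤ i)
    (hiN : i ≤ N) :
    incr s i = dpar a i / qq p (bG E (i - 1)) -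
        s 1 * ((qq p (bG E i) - qq p (bG E (i - 1))) / qq p (bG E (i - 1))) +
      ∑ l ∈ Ioc i N, if (i, l) ∈ E then gammaG p E i l * incr s l else 0 := by
  have hb := bG_pred_le hE hi
  have hq := qq_bG_pred_pos hp hE hN hi hiN
  have hsum : ∑ j ∈ Ioc (bG E (i - 1)) (bG E i), p j * (s i - s j + s 1) =
      (qq p (bG E i) - qq p (bG E (i - 1))) * s 1 -
        ∑ l ∈ Ioc i (bG E i), (qq p (bG E i) - qq p (max (l - 1) (bG E (i - 1)))) * incr s l := by
    calc ∑ j ∈ Ioc (bG E (i - 1)) (bG E i), p j * (s i - s j + s 1)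
        = ∑ j ∈ Ioc (bG E (i - 1)) (bG E i), (p j * s 1 - p j * ∑ l ∈ Ioc i j, incr s l) :=
          sum_congr rfl fun j hj => by
            have := le_bG E (i - 1)
            rw [sum_Ioc_incr s hi (by have := (mem_Ioc.1 hj).1; omega)]
            ring
      _ = _ := by
          rw [sum_sub_distrib, ← sum_mul, sum_Ioc_mul_sum_Ioc, qq_sub_qq p hb]
          congr 1
          exact sum_congr rfl fun l hl => by
            rw [qq_sub_qq p (max_le (by have := (mem_Ioc.1 hl).2; omega) hb)]
  have hedges : ∑ l ∈ Ioc i N, (if (i, l) ∈ E then gammaG p E i l * incr s l else 0) =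
      (∑ l ∈ Ioc i (bG E i),
        (qq p (bG E i) - qq p (max (l - 1) (bG E (i - 1)))) * incr s l) / qq p (bG E (i - 1)) := by
    rw [← sum_Ioc_consecutive _ (le_bG E i) (bG_le hE.1 hN hiN), sum_div,
      sum_eq_zero (s := Ioc (bG E i) N) fun l hl =>
        if_neg fun h => (mem_Ioc.1 hl).1.not_ge (le_bG_of_mem (by omega) h), add_zero]
    refine sum_congr rfl fun l hl => ?_
    rw [if_pos (mem_of_lt_of_le_bG hE (by omega) (mem_Ioc.1 hl).1 (mem_Ioc.1 hl).2), gammaG]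
    ring
  rw [hedges, hs.dpar_eq hE hPG hN hi hiN, hsum]
  field_simp
  ring

end StationaryTuple

section PathSums

variable (E : Finset (ℕ × ℕ)) (γ : ℕ → ℕ → ℝ)

def pathWeight (L : List ℕ) : ℝ :=
  if L.IsChain (fun u v => (u, v) ∈ E) then pathProd γ L else 0

lemma pathWeight_pair (u v : ℕ) : pathWeight E γ [u, v] = if (u, v) ∈ E then γ u v else 0 := by
  simp [pathWeight, pathProd]

lemma pathWeight_cons_cons (u v : ℕ) (L : List ℕ) :
    pathWeight E γ (u :: v :: L) = if (u, v) ∈ E then γ u v * pathWeight E γ (v :: L) else 0 := by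
  by_cases huv : (u, v) ∈ E <;> by_cases hL : (v :: L).IsChain (fun u v => (u, v) ∈ E) <;>
    simp [pathWeight, pathProd, huv, hL]

lemma GammaPath_self (i : ℕ) : GammaPath E γ i i = 1 := if_pos rfl

lemma GammaPath_of_lt {i j : ℕ} (hij : i < j) :
    GammaPath E γ i j =
      ∑ S ∈ (Ioo i j).powerset, pathWeight E γ (sort (insert i (insert j S)) (· ≤ ·)) := by
  rw [GammaPath, if_neg hij.ne, if_pos hij]
  exact sum_congr rfl fun S _ => by rw [pathWeight]; congr

lemma sort_insert_of_forall_lt {x : ℕ} {T : Finset ℕ} (h : ∀ b ∈ T, x < b) :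
    sort (insert x T) (· ≤ ·) = x :: sort T (· ≤ ·) :=
  sort_insert _ (fun b hb => (h b hb).le) fun hx => (h x hx).false

lemma GammaPath_eq_sum {i j : ℕ} (hij : i < j) :
    GammaPath E γ i j = ∑ l ∈ Ioc i j, if (i, l) ∈ E then γ i l * GammaPath E γ l j else 0 := by
  rw [GammaPath_of_lt E γ hij, sum_powerset_Ioo, ← Ioo_insert_right hij, sum_insert (by simp),
    GammaPath_self, mul_one]
  congr 1
  · rw [sort_insert_of_forall_lt (by simpa using hij), LawfulSingleton.insert_empty_eq,
      sort_singleton, pathWeight_pair]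
  · refine sum_congr rfl fun l hl => ?_
    obtain ⟨hil, hlj⟩ := mem_Ioo.1 hl
    have hsort : ∀ S ∈ (Ioo l j).powerset, sort (insert i (insert j (insert l S))) (· ≤ ·) =
        i :: sort (insert l (insert j S)) (· ≤ ·) := fun S hS => by
      have hS : ∀ b ∈ S, l < b ∧ b < j := fun b hb => mem_Ioo.1 (mem_powerset.1 hS hb)
      rw [insert_comm j l, sort_insert_of_forall_lt]
      intro b hb
      simp only [mem_insert] at hb
      rcases hb with rfl | rfl | hb
      · exact hil
      · exact hij
      · exact hil.trans (hS b hb).1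
    have hsort' : ∀ S ∈ (Ioo l j).powerset,
        sort (insert l (insert j S)) (· ≤ ·) = l :: sort (insert j S) (· ≤ ·) := fun S hS => by
      refine sort_insert_of_forall_lt fun b hb => ?_
      rcases mem_insert.1 hb with rfl | hb
      · exact hlj
      · exact (mem_Ioo.1 (mem_powerset.1 hS hb)).1
    rw [sum_congr rfl fun S hS => by
      rw [hsort S hS, hsort' S hS, pathWeight_cons_cons, ← hsort' S hS], GammaPath_of_lt E γ hlj]
    split_ifs <;> simp [mul_sum]

variable {E γ}

lemma pathWeight_nonneg (hγ : ∀ u v, (u, v) ∈ E → 0 ≤ γ u v) (L : List ℕ) :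
    0 ≤ pathWeight E γ L := by
  induction L with
  | nil => simp [pathWeight, pathProd]
  | cons u L ih =>
    cases L with
    | nil => simp [pathWeight, pathProd]
    | cons v L =>
      rw [pathWeight_cons_cons]
      split_ifs with huv
      · exact mul_nonneg (hγ u v huv) ih
      · exact le_rfl

lemma GammaPath_nonneg (hγ : ∀ u v, (u, v) ∈ E → 0 ≤ γ u v) (i j : ℕ) :
    0 ≤ GammaPath E γ i j := by
  rcases lt_trichotomy i j with hij | rfl | hji
  · rw [GammaPath_of_lt E γ hij]
    exact sum_nonneg fun S _ => pathWeight_nonneg hγ _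
  · rw [GammaPath_self]
    exact zero_le_one
  · rw [GammaPath, if_neg hji.ne', if_neg hji.not_gt]

theorem eq_sum_GammaPath_mul {N : ℕ} {z w : ℕ → ℝ}
    (hz : ∀ i, 1 ≤ i → i ≤ N →
      z i = w i + ∑ l ∈ Ioc i N, if (i, l) ∈ E then γ i l * z l else 0)
    {i : ℕ} (hi : 1 ≤ i) (hiN : i ≤ N) :
    z i = ∑ j ∈ Icc i N, GammaPath E γ i j * w j := by
  induction hk : N - i using Nat.strong_induction_on generalizing i with
  | _ k ih =>
  have hsub : ∀ l ∈ Ioc i N, (if (i, l) ∈ E then γ i l * z l else 0) =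
      ∑ j ∈ Icc l N, if (i, l) ∈ E then γ i l * (GammaPath E γ l j * w j) else 0 := by
    intro l hl
    obtain ⟨hil, hlN⟩ := mem_Ioc.1 hl
    rw [ih (N - l) (by omega) (by omega) hlN rfl]
    split_ifs <;> simp [mul_sum]
  rw [hz i hi hiN, sum_congr rfl hsub,
    sum_comm' (t' := Ioc i N) (s' := fun j => Ioc i j) fun l j => by
      simp only [mem_Ioc, mem_Icc]; omega,
    ← Ioc_insert_left hiN, sum_insert (by simp), GammaPath_self, one_mul]
  congr 1
  refine sum_congr rfl fun j hj => ?_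
  rw [GammaPath_eq_sum E γ (mem_Ioc.1 hj).1, sum_mul]
  refine sum_congr rfl fun l _ => ?_
  split_ifs <;> ring

end PathSums

/-- formula for the increments of the stationary tuple and for the front speed
on the region `P_G`, Theorems 1.2 and 4.4. -/
theorem stmt_9 (N : ℕ) (hN : 1 ≤ N) (a p : ℕ → ℝ) (hap : IsParam N a p)
    (E : Finset (ℕ × ℕ)) (hE : IsDCGraph N E)
    (s : ℕ → ℝ) (hs : IsStatTuple N a p s) (hPG : GrEdges N s = E) :
    (∀ i, 1 ≤ i → i ≤ N → s i - (if i = 1 then 0 else s (i - 1)) = zG N a p E i) ∧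
    1 / s 1 =
      (1 + ∑ j ∈ Finset.Icc 1 N,
          GammaG p E 1 j * (qq p (bG E j) - qq p (bG E (j - 1))) / qq p (bG E (j - 1))) /
        (∑ j ∈ Finset.Icc 1 N, GammaG p E 1 j * dpar a j / qq p (bG E (j - 1))) := by
  have hp := hap.2.2
  have hincr : ∀ i, 1 ≤ i → i ≤ N → incr s i =
      (∑ j ∈ Icc i N, GammaG p E i j * dpar a j / qq p (bG E (j - 1))) - s 1 *
        ∑ j ∈ Icc i N,
          GammaG p E i j * (qq p (bG E j) - qq p (bG E (j - 1))) / qq p (bG E (j - 1)) :=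
    fun i hi hiN => by
      rw [eq_sum_GammaPath_mul (fun i hi hiN => hs.incr_eq hp hE hPG hN hi hiN) hi hiN, mul_sum,
        ← sum_sub_distrib]
      exact sum_congr rfl fun j _ => by rw [GammaG]; ring
  set A := ∑ j ∈ Icc 1 N, GammaG p E 1 j * dpar a j / qq p (bG E (j - 1))
  set B := ∑ j ∈ Icc 1 N,
    GammaG p E 1 j * (qq p (bG E j) - qq p (bG E (j - 1))) / qq p (bG E (j - 1))
  have hB : 0 ≤ B := sum_nonneg fun j hj => by
    obtain ⟨hj, hjN⟩ := mem_Icc.1 hj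
    refine div_nonneg (mul_nonneg (GammaPath_nonneg (fun u v => gammaG_nonneg hp hE hN) 1 j) ?_)
      (qq_bG_pred_pos hp hE hN hj hjN).le
    exact sub_nonneg.2 (qq_le_qq (fun i hi hiN => (hp i hi hiN).le) (bG_pred_le hE hj)
      (bG_le hE.1 hN hjN))
  have hAB : s 1 * (1 + B) = A := by linarith [incr_one s ▸ hincr 1 le_rfl hN]
  have hz1 : z1G N a p E = s 1 := by
    rw [z1G, div_eq_iff (by positivity)]
    exact hAB.symm
  refine ⟨fun i hi hiN => ?_, ?_⟩
  · change incr s i = zG N a p E i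
    rw [zG, hz1]
    split_ifs with h1
    · rw [h1, incr_one]
    · exact hincr i hi hiN
  · rw [div_eq_div_iff hs.1.ne' (hAB ▸ by have := hs.1; positivity)]
    linarith
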